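/- There exists a T₂-anonymous predictor P : (ℝ → S) → (ℝ → S) such that for every scenario f, the set {x ∈ ℝ : P(f)(x) ≠ f(x)} is countable. -/

import Mathlib

/-!
Call `(g, p)` and `(f, x)` equivalent when an increasing affine map sending `p` to `x` carries
the past of `g` before `p` onto the past of `f` before `x`. Fix a well-ordering of all scenarios;
at `x` the predictor takes the least `g` realizing the class of `(f, x)` at some point `p`, and
guesses `g p`, with `p` chosen below another realizing point whenever there is one. The guess
depends only on the class of `(f, x)`, which gives past-dependence and T₂-anonymity.

The key fact is that if `(g, p₁)` and `(g, p₂)` are equivalent to `(g, r)` with `p₁, p₂ < r`,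
then `g p₁ = g p₂`: the two affine self-similarities of `g` below `r` have a commutator which is
a translation, and chasing around it connects `p₁` to `p₂`. So if the least realizer `g` of the
class of `x` is also the least realizer at some later time, the guess is correct unless `x` is
represented at a *mismatch* point `m` of `g`, where `g m` differs from `g` at an earlier
equivalent point. Mismatch points of `g` are isolated from the left among themselves, hence
countable, and each of them represents at most one error. The least realizer increases with `x`,
so the times after which it changes at once are well-ordered, hence countable, and every other
level of it contains a rational number.
-/

open Set

theorem Set.WellFoundedOn.countable {α : Type*} [LinearOrder α] [TopologicalSpace α]
    [OrderTopology α] [SecondCountableTopology α] [NoMaxOrder α] {s : Set α}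
    (hs : s.WellFoundedOn (· < ·)) : s.Countable := by
  refine (countable_image_lt_image_Ioi_within s id).mono fun x hx => ?_
  refine ⟨hx, ?_⟩
  by_cases hne : (s ∩ Ioi x).Nonempty
  · obtain ⟨m, ⟨-, hxm⟩, hmin⟩ := (hs.subset inter_subset_left).exists_minimal hne
    exact ⟨m, hxm, fun y hy hxy => not_lt.1 fun hym => (hmin ⟨hy, hxy⟩ hym.le).not_gt hym⟩
  · obtain ⟨z, hz⟩ := exists_gt x
    exact ⟨z, hz, fun y hy hxy => (hne ⟨y, hy, hxy⟩).elim⟩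

namespace AnonymousPredictor

variable {S : Type*}

def PastEquiv (g : ℝ → S) (p : ℝ) (f : ℝ → S) (x : ℝ) : Prop :=
  ∃ c d : ℝ, 0 < c ∧ c * p + d = x ∧ ∀ y < p, g y = f (c * y + d)

namespace PastEquiv

variable {f f' g k : ℝ → S} {p q x z : ℝ}

protected theorem refl (f : ℝ → S) (x : ℝ) : PastEquiv f x f x :=
  ⟨1, 0, one_pos, by ring, fun y _ => by simp⟩

protected theorem symm (h : PastEquiv g p f x) : PastEquiv f x g p := by
  obtain ⟨c, d, hc, rfl, hgf⟩ := h
  refine ⟨c⁻¹, -d / c, inv_pos.2 hc, by field_simp; ring, fun y hy => ?_⟩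
  have hy' : c⁻¹ * y + -d / c < p := by
    rw [← sub_neg]; field_simp; linarith
  rw [hgf _ hy']
  congr 1
  field_simp
  ring

protected theorem trans (h₁ : PastEquiv g p k q) (h₂ : PastEquiv k q f x) :
    PastEquiv g p f x := by
  obtain ⟨c, d, hc, rfl, hgk⟩ := h₁
  obtain ⟨c', d', hc', rfl, hkf⟩ := h₂
  refine ⟨c' * c, c' * d + d', mul_pos hc' hc, by ring, fun y hy => ?_⟩
  rw [hgk y hy, hkf _ (by nlinarith)]
  ring_nf

theorem congr_right (hff' : ∀ y < x, f y = f' y) (h : PastEquiv g p f x) :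
    PastEquiv g p f' x := by
  obtain ⟨c, d, hc, rfl, hgf⟩ := h
  exact ⟨c, d, hc, rfl, fun y hy => by rw [hgf y hy, hff' _ (by nlinarith)]⟩

theorem comp_affine_iff {a b : ℝ} (ha : 0 < a) :
    PastEquiv g p (fun y => f (a * y + b)) x ↔ PastEquiv g p f (a * x + b) := by
  constructor
  · rintro ⟨c, d, hc, rfl, hgf⟩
    exact ⟨a * c, a * d + b, mul_pos ha hc, by ring, fun y hy => by rw [hgf y hy]; ring_nf⟩
  · rintro ⟨c, d, hc, hx, hgf⟩
    refine ⟨c / a, (d - b) / a, div_pos hc ha, ?_, fun y hy => ?_⟩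
    · field_simp; linarith
    · rw [hgf y hy]; congr 1; field_simp; ring

theorem exists_lt_of_lt (h : PastEquiv g p f z) (hxz : x < z) :
    ∃ q < p, PastEquiv g q f x ∧ g q = f x := by
  obtain ⟨c, d, hc, rfl, hgf⟩ := h
  obtain ⟨q, rfl⟩ : ∃ q, c * q + d = x := ⟨(x - d) / c, by field_simp; ring⟩
  have hq : q < p := lt_of_mul_lt_mul_left (by linarith) hc.le
  exact ⟨q, hq, ⟨c, d, hc, rfl, fun y hy => hgf y (hy.trans hq)⟩, hgf q hq⟩

end PastEquiv

/- With `A z = α z + a` and `B z = β z + b`, the maps `A ∘ B` and `B ∘ A` differ by the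
translation `α b + a - (β a + b) = α² β t`. The chain below is a word in `A`, `B` and their
inverses leading from `a = A 0` to `b = B 0` through points of `(-∞, 0)` only. -/
theorem apply_eq_of_affine_invariant_of_neg (h : ℝ → S) {α β a b t : ℝ}
    (hα : 0 < α) (hβ : 0 < β) (ha : a < 0) (hb : b < 0) (ht : t < 0)
    (hA : ∀ z < 0, h (α * z + a) = h z) (hB : ∀ z < 0, h (β * z + b) = h z)
    (hs : α ^ 2 * β * t = α * b + a - (β * a + b)) : h a = h b := by
  have nA : ∀ z < 0, α * z + a < 0 := fun z hz => by nlinarith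
  have nB : ∀ z < 0, β * z + b < 0 := fun z hz => by nlinarith
  have hu : α * (1 + α) * t + a < 0 := by nlinarith [mul_pos hα (by linarith : (0:ℝ) < 1 + α)]
  calc h a = h (α * (β * a + b) + a) := by rw [hA _ (nB a ha), hB a ha]
    _ = h (β * (α * (α * t + a) + a) + b) := by congr 1; linear_combination -hs
    _ = h t := by rw [hB _ (nA _ (nA t ht)), hA _ (nA t ht), hA t ht]
    _ = h (α * (β * t + b) + a) := by rw [hA _ (nB t ht), hB t ht]
    _ = h (β * (α * (1 + α) * t + a) + b) := by congr 1; linear_combination -hs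
    _ = h (β * (α * (α * (1 + α) * t + a) + a) + b) := by
      rw [hB _ hu, hB _ (nA _ hu), hA _ hu]
    _ = h (α * (α * b + a) + a) := by congr 1; linear_combination (1 + α) * hs
    _ = h b := by rw [hA _ (nA b hb), hA b hb]

theorem apply_eq_of_affine_invariant (h : ℝ → S) {α β a b : ℝ}
    (hα : 0 < α) (hβ : 0 < β) (ha : a < 0) (hb : b < 0)
    (hA : ∀ z < 0, h (α * z + a) = h z) (hB : ∀ z < 0, h (β * z + b) = h z) : h a = h b := by
  rcases lt_trichotomy (α * b + a) (β * a + b) with hs | hs | hs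
  · refine apply_eq_of_affine_invariant_of_neg h hα hβ ha hb ?_ hA hB
      (t := (α * b + a - (β * a + b)) / (α ^ 2 * β)) ?_
    · exact div_neg_of_neg_of_pos (by linarith) (by positivity)
    · field_simp
  · calc h a = h (β * a + b) := (hB a ha).symm
      _ = h (α * b + a) := by rw [hs]
      _ = h b := hA b hb
  · refine (apply_eq_of_affine_invariant_of_neg h hβ hα hb ha ?_ hB hA
      (t := (β * a + b - (α * b + a)) / (β ^ 2 * α)) ?_).symm
    · exact div_neg_of_neg_of_pos (by linarith) (by positivity)
    · field_simp

theorem PastEquiv.apply_eq_of_lt {g : ℝ → S} {p₁ p₂ r : ℝ} (h₁ : PastEquiv g p₁ g r)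
    (h₂ : PastEquiv g p₂ g r) (hp₁ : p₁ < r) (hp₂ : p₂ < r) : g p₁ = g p₂ := by
  obtain ⟨α, a, hα, rfl, hA⟩ := h₁.symm
  obtain ⟨β, b, hβ, rfl, hB⟩ := h₂.symm
  have key := apply_eq_of_affine_invariant (fun y => g (y + r)) hα hβ
    (a := α * r + a - r) (b := β * r + b - r) (by linarith) (by linarith)
    (fun z hz => by rw [hA (z + r) (by linarith)]; ring_nf)
    (fun z hz => by rw [hB (z + r) (by linarith)]; ring_nf)
  simpa using key

noncomputable def minRealizer (f : ℝ → S) (x : ℝ) : ℝ → S :=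
  WellOrderingRel.isWellOrder.wf.min {g | ∃ p, PastEquiv g p f x} ⟨f, x, .refl f x⟩

def realizingPoints (f : ℝ → S) (x : ℝ) : Set ℝ := {p | PastEquiv (minRealizer f x) p f x}

noncomputable def classPoint (M : Set ℝ) : ℝ :=
  Classical.epsilon fun p => p ∈ M ∧ ((∃ r ∈ M, p < r) ∨ M.Subsingleton)

noncomputable def predictor (f : ℝ → S) (x : ℝ) : S :=
  minRealizer f x (classPoint (realizingPoints f x))

section Predictor

variable {f f' : ℝ → S} {x x' q r : ℝ}

theorem predictor_eq_of_forall_pastEquiv_iff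
    (h : ∀ g p, PastEquiv g p f x ↔ PastEquiv g p f' x') : predictor f x = predictor f' x' := by
  have hmin : minRealizer f x = minRealizer f' x' := by simp only [minRealizer, h]
  simp only [predictor, realizingPoints, hmin, h]

theorem predictor_congr (hff' : ∀ y < x, f y = f' y) : predictor f x = predictor f' x :=
  predictor_eq_of_forall_pastEquiv_iff fun _ _ =>
    ⟨.congr_right hff', .congr_right fun y hy => (hff' y hy).symm⟩

theorem predictor_comp_affine {a b : ℝ} (ha : 0 < a) :
    predictor (fun y => f (a * y + b)) x = predictor f (a * x + b) :=
  predictor_eq_of_forall_pastEquiv_iff fun _ _ => PastEquiv.comp_affine_iff ha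

theorem minRealizer_apply_eq_of_lt {p₁ p₂ r₁ r₂ : ℝ}
    (hp₁ : p₁ ∈ realizingPoints f x) (hp₂ : p₂ ∈ realizingPoints f x)
    (hr₁ : r₁ ∈ realizingPoints f x) (hr₂ : r₂ ∈ realizingPoints f x)
    (h₁ : p₁ < r₁) (h₂ : p₂ < r₂) : minRealizer f x p₁ = minRealizer f x p₂ := by
  wlog hr : r₁ ≤ r₂ generalizing p₁ p₂ r₁ r₂
  · exact (this hp₂ hp₁ hr₂ hr₁ h₂ h₁ (le_of_not_ge hr)).symm
  exact PastEquiv.apply_eq_of_lt (hp₁.trans hr₂.symm) (hp₂.trans hr₂.symm) (h₁.trans_le hr) h₂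

theorem classPoint_spec (hq : q ∈ realizingPoints f x) :
    classPoint (realizingPoints f x) ∈ realizingPoints f x ∧
      ((∃ r ∈ realizingPoints f x, classPoint (realizingPoints f x) < r) ∨
        (realizingPoints f x).Subsingleton) := by
  refine Classical.epsilon_spec (p := fun p => p ∈ realizingPoints f x ∧ _) ?_
  by_cases hM : (realizingPoints f x).Subsingleton
  · exact ⟨q, hq, Or.inr hM⟩
  · obtain ⟨p₁, hp₁, p₂, hp₂, hne⟩ := Set.not_subsingleton_iff.1 hM
    rcases hne.lt_or_gt with h | h
    · exact ⟨p₁, hp₁, Or.inl ⟨p₂, hp₂, h⟩⟩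
    · exact ⟨p₂, hp₂, Or.inl ⟨p₁, hp₁, h⟩⟩

theorem predictor_eq_of_lt (hq : q ∈ realizingPoints f x) (hr : r ∈ realizingPoints f x)
    (hqr : q < r) : predictor f x = minRealizer f x q := by
  obtain ⟨hmem, hsel | hsub⟩ := classPoint_spec hq
  · obtain ⟨r', hr', hlt⟩ := hsel
    exact minRealizer_apply_eq_of_lt hmem hq hr' hr hlt hqr
  · exact absurd (hsub hq hr) hqr.ne

theorem predictor_eq_of_subsingleton (hq : q ∈ realizingPoints f x)
    (hM : (realizingPoints f x).Subsingleton) : predictor f x = minRealizer f x q :=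
  congrArg (minRealizer f x) (hM (classPoint_spec hq).1 hq)

end Predictor

section Levels

variable (f : ℝ → S) {x y z : ℝ}

theorem exists_pastEquiv_minRealizer (x : ℝ) : ∃ p, PastEquiv (minRealizer f x) p f x :=
  WellFounded.min_mem _ {g | ∃ p, PastEquiv g p f x} _

theorem not_minRealizer_lt_of_lt (hxz : x < z) :
    ¬ WellOrderingRel (minRealizer f z) (minRealizer f x) := by
  obtain ⟨p, hp⟩ := exists_pastEquiv_minRealizer f z
  obtain ⟨q, -, hq, -⟩ := hp.exists_lt_of_lt hxz
  exact WellFounded.not_lt_min _ {g | ∃ p, PastEquiv g p f x} ⟨q, hq⟩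

theorem minRealizer_eq_of_lt_of_lt (hxy : x < y) (hyz : y < z)
    (h : minRealizer f z = minRealizer f x) : minRealizer f y = minRealizer f x := by
  rcases trichotomous_of WellOrderingRel (minRealizer f y) (minRealizer f x) with hlt | heq | hgt
  · exact absurd hlt (not_minRealizer_lt_of_lt f hxy)
  · exact heq
  · exact absurd (h ▸ hgt) (not_minRealizer_lt_of_lt f hyz)

def levelMaxima : Set ℝ := {x | ∀ z, x < z → minRealizer f z ≠ minRealizer f x}

theorem exists_lt_minRealizer_eq (hx : x ∉ levelMaxima f) :
    ∃ z, x < z ∧ minRealizer f z = minRealizer f x := by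
  simpa [levelMaxima] using hx

theorem exists_rat_minRealizer_eq (hx : x ∉ levelMaxima f) :
    ∃ q : ℚ, minRealizer f q = minRealizer f x := by
  obtain ⟨z, hxz, hz⟩ := exists_lt_minRealizer_eq f hx
  obtain ⟨q, hxq, hqz⟩ := exists_rat_btwn hxz
  exact ⟨q, minRealizer_eq_of_lt_of_lt f hxq hqz hz⟩

theorem levelMaxima_countable : (levelMaxima f).Countable := by
  refine Set.WellFoundedOn.countable ?_
  refine Set.WellFoundedOn.mono' (r := InvImage WellOrderingRel (minRealizer f)) ?_
    (InvImage.wf _ WellOrderingRel.isWellOrder.wf).wellFoundedOn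
  rintro x hx z - hxz
  rcases trichotomous_of WellOrderingRel (minRealizer f x) (minRealizer f z) with hlt | heq | hgt
  · exact hlt
  · exact absurd heq.symm (hx z hxz)
  · exact absurd hgt (not_minRealizer_lt_of_lt f hxz)

theorem exists_mem_realizingPoints_apply_eq (hx : x ∉ levelMaxima f) :
    ∃ q ∈ realizingPoints f x, minRealizer f x q = f x := by
  obtain ⟨z, hxz, hz⟩ := exists_lt_minRealizer_eq f hx
  obtain ⟨p, hp⟩ := exists_pastEquiv_minRealizer f z
  rw [hz] at hp
  obtain ⟨q, -, hq, hqx⟩ := hp.exists_lt_of_lt hxz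
  exact ⟨q, hq, hqx⟩

end Levels

def IsMismatch (g : ℝ → S) (m : ℝ) : Prop := ∃ p < m, PastEquiv g p g m ∧ g p ≠ g m

theorem IsMismatch.lt_of_pastEquiv {g : ℝ → S} {m p r : ℝ} (hm : IsMismatch g m)
    (hp : PastEquiv g p g r) (hmr : m < r) : m < p := by
  obtain ⟨p', hp'm, hp', hne⟩ := hm
  obtain ⟨q, hqp, hq, hqm⟩ := hp.exists_lt_of_lt hmr
  rcases lt_trichotomy q m with hlt | rfl | hgt
  · exact absurd ((PastEquiv.apply_eq_of_lt hp' hq hp'm hlt).trans hqm) hne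
  · exact hqp
  · exact absurd (PastEquiv.apply_eq_of_lt (hp'.trans hq.symm) hq.symm (hp'm.trans hgt) hgt) hne

theorem setOf_isMismatch_countable (g : ℝ → S) : {m | IsMismatch g m}.Countable := by
  refine (countable_image_lt_image_Iio_within {m | IsMismatch g m} id).mono fun m hm => ?_
  obtain ⟨p, hpm, hp, -⟩ := id hm
  exact ⟨hm, p, hpm, fun m' hm' hlt => (IsMismatch.lt_of_pastEquiv hm' hp hlt).le⟩

section Errors

variable {f : ℝ → S} {x : ℝ}

theorem exists_isMismatch_of_predictor_ne (hx : x ∉ levelMaxima f)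
    (herr : predictor f x ≠ f x) :
    ∃ m, IsMismatch (minRealizer f x) m ∧ PastEquiv (minRealizer f x) m f x := by
  obtain ⟨q, hq, hqx⟩ := exists_mem_realizingPoints_apply_eq f hx
  have hM : ¬ (realizingPoints f x).Subsingleton := fun hM =>
    herr ((predictor_eq_of_subsingleton hq hM).trans hqx)
  obtain ⟨p, hp, hpq⟩ : ∃ p ∈ realizingPoints f x, p ≠ q := by
    by_contra! h
    exact hM fun p₁ h₁ p₂ h₂ => (h p₁ h₁).trans (h p₂ h₂).symm
  rcases hpq.lt_or_gt with hlt | hgt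
  · refine ⟨q, ⟨p, hlt, hp.trans hq.symm, ?_⟩, hq⟩
    rw [← predictor_eq_of_lt hp hq hlt, hqx]
    exact herr
  · exact absurd ((predictor_eq_of_lt hq hp hgt).trans hqx) herr

theorem predictor_eq_of_pastEquiv_of_lt {x₁ x₂ : ℝ} (hlt : x₁ < x₂)
    (hx₂ : x₂ ∉ levelMaxima f) (hmin : minRealizer f x₁ = minRealizer f x₂)
    (h : PastEquiv f x₂ f x₁) : predictor f x₁ = f x₁ := by
  obtain ⟨q₂, hq₂, -⟩ := exists_mem_realizingPoints_apply_eq f hx₂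
  obtain ⟨q₁, hq₁₂, hq₁, hq₁x⟩ := PastEquiv.exists_lt_of_lt hq₂ hlt
  have hq₂₁ : PastEquiv (minRealizer f x₁) q₂ f x₁ := hmin ▸ hq₂.trans h
  rw [← hmin] at hq₁ hq₁x
  rw [predictor_eq_of_lt hq₁ hq₂₁ hq₁₂, hq₁x]

end Errors

theorem setOf_predictor_ne_countable (f : ℝ → S) : {x | predictor f x ≠ f x}.Countable := by
  let errorsAt (g : ℝ → S) (m : ℝ) : Set ℝ :=
    {x | x ∉ levelMaxima f ∧ predictor f x ≠ f x ∧ minRealizer f x = g ∧ PastEquiv g m f x}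
  have herrorsAt (g : ℝ → S) (m : ℝ) : (errorsAt g m).Subsingleton := by
    suffices h : ∀ x₁ ∈ errorsAt g m, ∀ x₂ ∈ errorsAt g m, ¬ x₁ < x₂ from
      fun x₁ h₁ x₂ h₂ => le_antisymm (not_lt.1 (h x₂ h₂ x₁ h₁)) (not_lt.1 (h x₁ h₁ x₂ h₂))
    rintro x₁ ⟨-, herr₁, hg₁, hm₁⟩ x₂ ⟨hx₂, -, hg₂, hm₂⟩ hlt
    exact herr₁ <|
      predictor_eq_of_pastEquiv_of_lt hlt hx₂ (hg₁.trans hg₂.symm) (hm₂.symm.trans hm₁)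
  have hsub : {x | predictor f x ≠ f x} ⊆ levelMaxima f ∪
      ⋃ q : ℚ, ⋃ m ∈ {m | IsMismatch (minRealizer f q) m}, errorsAt (minRealizer f q) m := by
    intro x herr
    by_cases hx : x ∈ levelMaxima f
    · exact Or.inl hx
    obtain ⟨q, hq⟩ := exists_rat_minRealizer_eq f hx
    obtain ⟨m, hm, hmx⟩ := exists_isMismatch_of_predictor_ne hx herr
    rw [← hq] at hm hmx
    exact Or.inr (mem_iUnion.2 ⟨q, mem_iUnion₂.2 ⟨m, hm, hx, herr, hq.symm, hmx⟩⟩)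
  refine ((levelMaxima_countable f).union ?_).mono hsub
  exact countable_iUnion fun q => (setOf_isMismatch_countable _).biUnion fun m _ =>
    (herrorsAt _ m).countable

end AnonymousPredictor

theorem T2_anonymous_predictor_general {S : Type*} :
    ∃ P : (ℝ → S) → (ℝ → S),
      (∀ (f g : ℝ → S) (x : ℝ), (∀ y < x, f y = g y) → P f x = P g x) ∧
      (∀ (f : ℝ → S) (a b : ℝ), 0 < a →
        P (fun y => f (a * y + b)) = fun x => P f (a * x + b)) ∧
      ∀ f : ℝ → S, {x : ℝ | P f x ≠ f x}.Countable :=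
  ⟨AnonymousPredictor.predictor, fun _ _ _ h => AnonymousPredictor.predictor_congr h,
    fun _ _ _ ha => funext fun _ => AnonymousPredictor.predictor_comp_affine ha,
    AnonymousPredictor.setOf_predictor_ne_countable⟩

theorem T2_anonymous_predictor {S : Type*} [Nonempty S] :
    ∃ P : (ℝ → S) → (ℝ → S),
      (∀ (f g : ℝ → S) (x : ℝ), (∀ y < x, f y = g y) → P f x = P g x) ∧
      (∀ (f : ℝ → S) (a b : ℝ), 0 < a →
        P (fun y => f (a * y + b)) = fun x => P f (a * x + b)) ∧
      ∀ f : ℝ → S, {x : ℝ | P f x ≠ f x}.Countable :=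
  T2_anonymous_predictor_general
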